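/- Let K be a field of characteristic zero and f ∈ K[x_1,...,x_n] a form of degree d with polarization f̃ : (K^n)^d → K. Then 2^{-d}·str(f̃) ≤ str(f) ≤ str(f̃), where str(f̃) is the strength of f̃ regarded as a form of degree d on the dn variables of (K^n)^d. -/

import Mathlib

open MvPolynomial

/-- `StrLE I d f r` : the form `f` (of degree `d`) has strength at most `r` relative to the
homogeneous ideal `I`, i.e. `f ≡ g₁h₁+...+g_rh_r mod I` with the `gᵢ, hᵢ` forms of
strictly lower positive degree. -/
def StrLE {K : Type u} {σ : Type v} [CommRing K] (I : Ideal (MvPolynomial σ K)) (d : ℕ)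
    (f : MvPolynomial σ K) (r : ℕ) : Prop :=
  ∃ g h : Fin r → MvPolynomial σ K,
    (∀ t, ∃ a, 0 < a ∧ a < d ∧ (g t).IsHomogeneous a) ∧
    (∀ t, ∃ b, 0 < b ∧ b < d ∧ (h t).IsHomogeneous b) ∧
    f - ∑ t, g t * h t ∈ I

/-- The relative strength of a degree-`d` form `f` modulo the ideal `I`, as an
extended natural number (`⊤` if no decomposition exists, e.g. for linear forms). -/
noncomputable def relStrength {K : Type u} {σ : Type v} [CommRing K]
    (I : Ideal (MvPolynomial σ K)) (d : ℕ) (f : MvPolynomial σ K) : ℕ∞ :=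
  ⨅ r : {r : ℕ // StrLE I d f r}, (r.1 : ℕ∞)

/-- The collective relative strength of the forms `f 0, ..., f (s-1)` (all of degree `d`)
modulo the ideal `I`: the minimum over nonzero coefficient tuples of the relative strength
of the corresponding linear combination. -/
noncomputable def relStrengthFam {K : Type u} {σ : Type v} [CommRing K]
    (I : Ideal (MvPolynomial σ K)) (d s : ℕ) (f : ℕ → MvPolynomial σ K) : ℕ∞ :=
  ⨅ a : {a : ℕ → K // ∃ j < s, a j ≠ 0},
    relStrength I d (∑ j ∈ Finset.range s, MvPolynomial.C (a.1 j) * f j)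

/-- A tower of forms: `h` layers; layer `i < h` consists of the forms
`form i j` for `j < size i`, all of degree `deg i`. -/
structure Tower (K : Type u) [CommRing K] (σ : Type v) where
  h : ℕ
  deg : ℕ → ℕ
  size : ℕ → ℕ
  form : ℕ → ℕ → MvPolynomial σ K

namespace Tower

variable {K : Type u} {L : Type w} {σ : Type v} [CommRing K]

/-- All forms of the tower are homogeneous of the degree of their layer. -/
def IsHomog (F : Tower K σ) : Prop :=
  ∀ i < F.h, ∀ j < F.size i, (F.form i j).IsHomogeneous (F.deg i)

/-- The ideal generated by the layers below layer `i`. -/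
noncomputable def lowerIdeal (F : Tower K σ) (i : ℕ) : Ideal (MvPolynomial σ K) :=
  Ideal.span {p | ∃ i' < i, ∃ j < F.size i', p = F.form i' j}

/-- The ideal generated by all forms of the tower. -/
noncomputable def idealOfAll (F : Tower K σ) : Ideal (MvPolynomial σ K) := F.lowerIdeal F.h

/-- `s_i + s_{i+1} + ... + s_h`. -/
def tailSize (F : Tower K σ) (i : ℕ) : ℕ := ∑ i' ∈ Finset.Ico i F.h, F.size i'

/-- The total number of forms in the tower. -/
def totalSize (F : Tower K σ) : ℕ := F.tailSize 0

/-- The tower is `(A,B,r)`-strong relative to an ambient ideal `J`: for each layer `i`,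
the collective relative strength of layer `i` modulo `J` and the lower layers
exceeds `A(s_i+...+s_h+r)^B`. -/
def IsStrongOver (J : Ideal (MvPolynomial σ K)) (F : Tower K σ) (A B r : ℕ) : Prop :=
  ∀ i < F.h, ((A * (F.tailSize i + r) ^ B : ℕ) : ℕ∞) <
    relStrengthFam (J ⊔ F.lowerIdeal i) (F.deg i) (F.size i) (F.form i)

/-- The tower is `(A,B,r)`-strong. -/
def IsStrong (F : Tower K σ) (A B r : ℕ) : Prop := F.IsStrongOver ⊥ A B r

/-- The tower obtained by applying a ring homomorphism to all coefficients. -/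
noncomputable def map [CommRing L] (φ : K →+* L) (F : Tower K σ) : Tower L σ where
  h := F.h
  deg := F.deg
  size := F.size
  form := fun i j => MvPolynomial.map φ (F.form i j)

/-- The tower is absolutely `(A,B,r)`-strong: it is `(A,B,r)`-strong after extending
scalars to an algebraic closure. -/
def AbsStrong {K : Type u} [Field K] (F : Tower K σ) (A B r : ℕ) : Prop :=
  (F.map (algebraMap K (AlgebraicClosure K))).IsStrong A B r

/-- The tower obtained by placing the layers of `G` above those of `F`. -/
def append (F G : Tower K σ) : Tower K σ where
  h := F.h + G.h
  deg := fun i => if i < F.h then F.deg i else G.deg (i - F.h)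
  size := fun i => if i < F.h then F.size i else G.size (i - F.h)
  form := fun i => if i < F.h then F.form i else G.form (i - F.h)

/-- The common zero locus of all forms of the tower. -/
def zeroSet (F : Tower K σ) : Set (σ → K) :=
  {x | ∀ i < F.h, ∀ j < F.size i, MvPolynomial.eval x (F.form i j) = 0}

/-- The `K`-rational points of `Z(F)` are Zariski dense in `Z(F)` (taken over an
algebraic closure of `K`): every polynomial vanishing on the image of the `K`-rational
zeros vanishes on all of `Z(F)`. -/
def KPointsDense {K : Type u} [Field K] (F : Tower K σ) : Prop :=
  ∀ p : MvPolynomial σ (AlgebraicClosure K),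
    (∀ y ∈ F.zeroSet, MvPolynomial.eval (fun t => algebraMap K (AlgebraicClosure K) (y t)) p = 0) →
    ∀ x ∈ (F.map (algebraMap K (AlgebraicClosure K))).zeroSet, MvPolynomial.eval x p = 0

end Tower

/-- The codimension (height) of the Zariski-closed set cut out by an ideal: the infimum
of the heights of the primes containing it. -/
noncomputable def idealCodim {R : Type u} [CommRing R] (I : Ideal R) : ℕ∞ :=
  ⨅ p : {p : PrimeSpectrum R // I ≤ p.asIdeal}, Order.height p.1

/-- `taylorSubst m f` is `f(x_1 + ... + x_m)`, a polynomial in `m` blocks of `n` variables. -/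
noncomputable def taylorSubst {K : Type u} [CommSemiring K] {n : ℕ} (m : ℕ)
    (f : MvPolynomial (Fin n) K) : MvPolynomial (Fin m × Fin n) K :=
  MvPolynomial.aeval (fun i : Fin n => ∑ k : Fin m, MvPolynomial.X (k, i)) f

/-- `taylorComponent m f e` is the multi-homogeneous component `f^e` of multi-degree `e`
in the Taylor expansion `f(x_1 + ... + x_m) = Σ_{e} f^e(x_1, ..., x_m)`. -/
noncomputable def taylorComponent {K : Type u} [CommSemiring K] {n : ℕ} (m : ℕ)
    (f : MvPolynomial (Fin n) K) (e : Fin m →₀ ℕ) : MvPolynomial (Fin m × Fin n) K :=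
  MvPolynomial.weightedHomogeneousComponent
    (fun v : Fin m × Fin n => Finsupp.single v.1 1) e (taylorSubst m f)

/-- The polarization `f̃` of a degree-`d` form `f`: the multilinear Taylor component
`f^{(1,...,1)}` of `f(h_1 + ... + h_d)`. -/
noncomputable def polarization {K : Type u} [CommSemiring K] {n : ℕ} (d : ℕ)
    (f : MvPolynomial (Fin n) K) : MvPolynomial (Fin d × Fin n) K :=
  taylorComponent d f (Finsupp.equivFunOnFinite.symm fun _ => 1)

/-! If `f = ∑ₜ gₜ hₜ`, taking the multidegree-`(1,…,1)` part of
`f(x₁+⋯+x_d) = ∑ₜ gₜ(x₁+⋯+x_d) hₜ(x₁+⋯+x_d)` writes `f̃` as `∑ₜ ∑_{a+b=(1,…,1)} gₜ^a hₜ^b`,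
a sum of at most `2^d r` products of forms of the same degrees as `gₜ, hₜ`. Conversely, setting
`x₁ = ⋯ = x_d = x` in `f̃` gives `d! f`, so a decomposition of `f̃` restricts to one of `d! f`, and
`d!` is invertible in characteristic zero. -/

open Finset.HasAntidiagonal

section Strength

variable {K σ : Type*} [CommRing K] {I : Ideal (MvPolynomial σ K)} {d : ℕ}
  {f : MvPolynomial σ K}

theorem relStrength_le_of_strLE {r : ℕ} (h : StrLE I d f r) : relStrength I d f ≤ r :=
  iInf_le_of_le ⟨r, h⟩ le_rfl

theorem le_relStrength {c : ℕ∞} (h : ∀ r, StrLE I d f r → c ≤ r) : c ≤ relStrength I d f :=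
  le_iInf fun r => h r.1 r.2

theorem le_mul_relStrength {c k : ℕ∞} (hk : k ≠ 0) (h : ∀ r, StrLE I d f r → c ≤ k * r) :
    c ≤ k * relStrength I d f := by
  rw [relStrength, ENat.mul_iInf' fun hk0 => absurd hk0 hk]
  exact le_iInf fun r => h r.1 r.2

theorem relStrength_le_card {ι : Type*} [Fintype ι] (g h : ι → MvPolynomial σ K)
    (hg : ∀ t, ∃ a, 0 < a ∧ a < d ∧ (g t).IsHomogeneous a)
    (hh : ∀ t, ∃ b, 0 < b ∧ b < d ∧ (h t).IsHomogeneous b)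
    (hf : f - ∑ t, g t * h t ∈ I) : relStrength I d f ≤ Fintype.card ι := by
  let e := (Fintype.equivFin ι).symm
  refine relStrength_le_of_strLE ⟨g ∘ e, h ∘ e, fun t => hg (e t), fun t => hh (e t), ?_⟩
  simpa only [Function.comp_apply, e.sum_comp fun t => g t * h t] using hf

end Strength

namespace MvPolynomial

variable {R ι σ M : Type*} [CommSemiring R] [AddCommMonoid M]

theorem weightedHomogeneousComponent_mul [DecidableEq M] [Finset.HasAntidiagonal M] (w : σ → M)
    (m : M) (p q : MvPolynomial σ R) :
    weightedHomogeneousComponent w m (p * q) = ∑ ab ∈ antidiagonal m,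
      weightedHomogeneousComponent w ab.1 p * weightedHomogeneousComponent w ab.2 q := by
  let := weightedGradedAlgebra R w
  simp only [← weightedDecomposition.decompose'_apply]
  rw [← DirectSum.coe_mul_apply_eq_sum_antidiagonal]
  exact congrArg (fun x => (x m : MvPolynomial σ R))
    (DirectSum.decompose_mul (weightedHomogeneousSubmodule R w) p q)

theorem IsHomogeneous.weightedHomogeneousComponent {p : MvPolynomial σ R} {a : ℕ}
    (hp : p.IsHomogeneous a) (w : σ → M) (m : M) :
    (weightedHomogeneousComponent w m p).IsHomogeneous a := by
  classical
  intro ν hν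
  rw [coeff_weightedHomogeneousComponent] at hν
  exact hp (ite_ne_right_iff.mp hν).2

theorem IsHomogeneous.aeval_C_X_mul {f : MvPolynomial σ R} {d : ℕ} (hf : f.IsHomogeneous d)
    (T : MvPolynomial ι (MvPolynomial σ R)) :
    MvPolynomial.aeval (fun i => C (X i) * T) f = C f * T ^ d := by
  conv_lhs => rw [f.as_sum]
  conv_rhs => rw [f.as_sum]
  rw [map_sum, map_sum, Finset.sum_mul]
  refine Finset.sum_congr rfl fun ν hν => ?_
  have hT : (ν.prod fun _ k => T ^ k) = T ^ d := by
    rw [Finsupp.prod, Finset.prod_pow_eq_pow_sum, ← Finsupp.degree_apply,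
      Finsupp.degree_eq_weight_one, ← hf (mem_support_iff.mp hν)]
    rfl
  have hX : (ν.prod fun i k => (C (X i) : MvPolynomial ι (MvPolynomial σ R)) ^ k)
      = C (ν.prod fun i k => X i ^ k) := by
    simp only [map_finsuppProd, map_pow]
  calc MvPolynomial.aeval (fun i => C (X i) * T) (monomial ν (coeff ν f))
      = C (C (coeff ν f)) * ((ν.prod fun i k => C (X i) ^ k) * ν.prod fun _ k => T ^ k) := by
        rw [aeval_monomial, ← Finsupp.prod_mul]
        simp only [mul_pow]
        rfl
    _ = C (monomial ν (coeff ν f)) * T ^ d := by rw [hX, hT, monomial_eq, map_mul, mul_assoc]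

theorem _root_.Finsupp.weight_single_fst (ν : ι × σ →₀ ℕ) :
    Finsupp.weight (fun v : ι × σ => Finsupp.single v.1 1) ν = ν.mapDomain Prod.fst := by
  rw [Finsupp.mapDomain, Finsupp.weight_apply]
  exact Finsupp.sum_congr fun v _ => by rw [Finsupp.smul_single, smul_eq_mul, mul_one]

variable (R ι σ) in
/-- Sends `x_{k,i}` to `Y_k • x_i`: the blocks are collapsed onto one set of variables while the
block multidegree survives as the `Y`-exponent. -/
noncomputable def markBlocks :
    MvPolynomial (ι × σ) R →ₐ[R] MvPolynomial ι (MvPolynomial σ R) :=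
  aeval fun v => C (X v.2) * X v.1

theorem markBlocks_monomial (ν : ι × σ →₀ ℕ) (c : R) :
    markBlocks R ι σ (monomial ν c)
      = monomial (ν.mapDomain Prod.fst) (monomial (ν.mapDomain Prod.snd) c) := by
  simp only [markBlocks, monomial_eq, map_mul, aeval_C, map_finsuppProd, map_pow, aeval_X,
    Finsupp.prod_mapDomain_index, pow_add, pow_zero, implies_true, mul_assoc, ← Finsupp.prod_mul,
    mul_pow]
  rfl

theorem coeff_markBlocks (e : ι →₀ ℕ) (p : MvPolynomial (ι × σ) R) :
    coeff e (markBlocks R ι σ p) = rename Prod.snd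
      (weightedHomogeneousComponent (fun v : ι × σ => Finsupp.single v.1 1) e p) := by
  classical
  induction p using MvPolynomial.induction_on' with
  | monomial ν c =>
    have hν := isWeightedHomogeneous_monomial _ ν c (Finsupp.weight_single_fst ν)
    rw [markBlocks_monomial, coeff_monomial]
    split_ifs with h
    · rw [← h, hν.weightedHomogeneousComponent_same, rename_monomial]
    · rw [hν.weightedHomogeneousComponent_ne e (Ne.symm h), map_zero]
  | add p q hp hq => rw [map_add, coeff_add, hp, hq, map_add, map_add]

end MvPolynomial

theorem Finsupp.card_antidiagonal_le_card_Iic {ι : Type*} [DecidableEq ι] (u : ι →₀ ℕ) :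
    (antidiagonal u).card ≤ (Finset.Iic u).card :=
  Finset.card_le_card_of_injOn Prod.fst
    (fun _ hab => Finset.mem_Iic.mpr (antidiagonal.fst_le hab))
    fun a ha b hb hab => by
      have hsum := (mem_antidiagonal.mp ha).trans (mem_antidiagonal.mp hb).symm
      rw [hab] at hsum
      exact Prod.ext hab (add_left_cancel hsum)

theorem card_antidiagonal_const_one_le (d : ℕ) :
    (antidiagonal (Finsupp.equivFunOnFinite.symm fun _ : Fin d => 1)).card ≤ 2 ^ d := by
  refine (Finsupp.card_antidiagonal_le_card_Iic _).trans_eq ?_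
  have hsupp : (Finsupp.equivFunOnFinite.symm fun _ : Fin d => 1).support = Finset.univ := by
    ext; simp
  simp [Finsupp.card_Iic, hsupp]

section Taylor

variable {R : Type*} [CommSemiring R] {n : ℕ}

theorem markBlocks_taylorSubst {f : MvPolynomial (Fin n) R} {d : ℕ} (hf : f.IsHomogeneous d)
    (m : ℕ) : markBlocks R (Fin m) (Fin n) (taylorSubst m f) = C f * (∑ k, X k) ^ d := by
  rw [taylorSubst, ← AlgHom.comp_apply, comp_aeval, ← hf.aeval_C_X_mul]
  congr 2 with i
  simp [markBlocks, Finset.mul_sum]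

theorem coeff_sum_X_pow_eq_factorial (d : ℕ) :
    coeff (Finsupp.equivFunOnFinite.symm fun _ => 1)
      ((∑ k : Fin d, X k : MvPolynomial (Fin d) R) ^ d) = d.factorial := by
  simp [coeff_sum_X_pow_of_fintype, Finsupp.sum_fintype,
    ← Finsupp.multinomial_of_support_subset (Finset.subset_univ _), Nat.multinomial]

theorem rename_snd_polarization {f : MvPolynomial (Fin n) R} {d : ℕ} (hf : f.IsHomogeneous d) :
    rename Prod.snd (polarization d f) = (d.factorial : MvPolynomial (Fin n) R) * f := by
  rw [polarization, taylorComponent, ← coeff_markBlocks, markBlocks_taylorSubst hf, coeff_C_mul,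
    coeff_sum_X_pow_eq_factorial, mul_comm]

theorem MvPolynomial.IsHomogeneous.taylorComponent {p : MvPolynomial (Fin n) R} {a : ℕ}
    (hp : p.IsHomogeneous a) (m : ℕ) (e : Fin m →₀ ℕ) :
    (taylorComponent m p e).IsHomogeneous a := by
  have hX : ∀ i, (∑ k : Fin m, X (k, i) : MvPolynomial (Fin m × Fin n) R).IsHomogeneous 1 :=
    fun i => IsHomogeneous.sum _ _ _ fun k _ => isHomogeneous_X _ _
  simpa only [_root_.taylorComponent, taylorSubst, aeval_eq_bind₁, one_mul] using
    (hp.aeval _ hX).weightedHomogeneousComponent _ e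

theorem taylorComponent_mul (m : ℕ) (p q : MvPolynomial (Fin n) R) (e : Fin m →₀ ℕ) :
    taylorComponent m (p * q) e = ∑ ab ∈ antidiagonal e,
      taylorComponent m p ab.1 * taylorComponent m q ab.2 := by
  rw [taylorComponent, taylorSubst, map_mul, weightedHomogeneousComponent_mul]
  rfl

end Taylor

section PolarizationStrength

variable {K : Type*} [CommRing K] {n d r : ℕ} {f : MvPolynomial (Fin n) K}

theorem StrLE.of_polarization (hd : IsUnit (d.factorial : K)) (hf : f.IsHomogeneous d)
    (hpol : StrLE ⊥ d (polarization d f) r) : StrLE ⊥ d f r := by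
  obtain ⟨g, h, hg, hh, hsum⟩ := hpol
  rw [Ideal.mem_bot, sub_eq_zero] at hsum
  obtain ⟨u, hu⟩ := hd
  refine ⟨fun t => C (↑u⁻¹ : K) * rename Prod.snd (g t), fun t => rename Prod.snd (h t),
    fun t => ?_, fun t => ?_, ?_⟩
  · obtain ⟨a, ha, had, hga⟩ := hg t
    exact ⟨a, ha, had, hga.rename_isHomogeneous.C_mul _⟩
  · obtain ⟨b, hb, hbd, hhb⟩ := hh t
    exact ⟨b, hb, hbd, hhb.rename_isHomogeneous⟩
  have hren := congrArg (rename Prod.snd) hsum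
  rw [rename_snd_polarization hf, map_sum] at hren
  rw [Ideal.mem_bot, sub_eq_zero]
  calc f = C (↑u⁻¹ : K) * ((d.factorial : MvPolynomial (Fin n) K) * f) := by
        rw [← map_natCast C, ← hu, ← mul_assoc, ← map_mul, Units.inv_mul, map_one, one_mul]
    _ = _ := by
        rw [hren, Finset.mul_sum]
        simp only [map_mul, mul_assoc]

theorem relStrength_polarization_le (hf : StrLE ⊥ d f r) :
    relStrength ⊥ d (polarization d f) ≤ ((2 ^ d : ℕ) : ℕ∞) * r := by
  obtain ⟨g, h, hg, hh, hsum⟩ := hf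
  rw [Ideal.mem_bot, sub_eq_zero] at hsum
  set u : Fin d →₀ ℕ := Finsupp.equivFunOnFinite.symm fun _ => 1
  have hpol : polarization d f = ∑ x : Fin r × antidiagonal u,
      taylorComponent d (g x.1) x.2.1.1 * taylorComponent d (h x.1) x.2.1.2 := by
    rw [polarization, hsum, taylorComponent, taylorSubst, map_sum, map_sum, Fintype.sum_prod_type]
    refine Finset.sum_congr rfl fun t _ => ?_
    rw [← taylorSubst, ← taylorComponent, taylorComponent_mul, ← Finset.sum_coe_sort]
  calc relStrength ⊥ d (polarization d f)
      ≤ Fintype.card (Fin r × antidiagonal u) := by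
        refine relStrength_le_card _ _ (fun x => ?_) (fun x => ?_)
          (by rw [hpol, sub_self]; exact zero_mem _)
        · obtain ⟨a, ha, had, hga⟩ := hg x.1
          exact ⟨a, ha, had, hga.taylorComponent d _⟩
        · obtain ⟨b, hb, hbd, hhb⟩ := hh x.1
          exact ⟨b, hb, hbd, hhb.taylorComponent d _⟩
    _ ≤ ((2 ^ d : ℕ) : ℕ∞) * r := by
        rw [Fintype.card_prod, Fintype.card_fin, Fintype.card_coe, mul_comm]
        exact_mod_cast Nat.mul_le_mul_right r (card_antidiagonal_const_one_le d)

end PolarizationStrength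

/-- For a form `f` of degree `d` over a field of characteristic zero,
with polarization `f̃` (a form of degree `d` on the `d·n` variables of `(Kⁿ)^d`):
`2^{-d}·str(f̃) ≤ str(f) ≤ str(f̃)`. -/
theorem stmt_14 (K : Type) [Field K] [CharZero K] (n d : ℕ)
    (f : MvPolynomial (Fin n) K) (hf : f.IsHomogeneous d) :
    relStrength (⊥ : Ideal (MvPolynomial (Fin n) K)) d f
        ≤ relStrength (⊥ : Ideal (MvPolynomial (Fin d × Fin n) K)) d (polarization d f)
      ∧
    relStrength (⊥ : Ideal (MvPolynomial (Fin d × Fin n) K)) d (polarization d f)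
        ≤ ((2 ^ d : ℕ) : ℕ∞) *
            relStrength (⊥ : Ideal (MvPolynomial (Fin n) K)) d f := by
  have hd : IsUnit (d.factorial : K) := (Nat.cast_ne_zero.mpr d.factorial_ne_zero).isUnit
  exact ⟨le_relStrength fun r hr => relStrength_le_of_strLE (hr.of_polarization hd hf),
    le_mul_relStrength (by simp) fun r hr => relStrength_polarization_le hr⟩
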